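/- Let 0 < α < 1, λ > 0, T > 0, 0 < τ_j ≤ v ≤ T for j = 1,…,n, let b_j ∈ C([0,T],ℝ) with B_j = sup|b_j|, and let g_j : ℝ → ℝ be Lipschitz with constants l_j > 0. Let ψ ∈ C([−v,0],ℝ) with ψ(0) = 0. If T^α · Σ_{j=1}^n B_j l_j < Γ(α+1), then there exists a unique x ∈ C([−v,T],ℝ) with x = ψ on [−v,0] and x(t) = ∫_0^t (t−s)^{α−1}E_{α,α}(−λ(t−s)^α) Σ_{j=1}^n b_j(s) g_j(x(s−τ_j)) ds for all t ∈ [0,T]. -/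

import Mathlib

/-- The two-parameter Mittag-Leffler function (real parameters). -/
noncomputable def mittagLeffler (α β z : ℝ) : ℝ :=
  ∑' n : ℕ, z ^ n / Real.Gamma (α * n + β)

/-!
Every delay is at least some `d > 0`, so on `[0, t]` the mild equation only sees `x` on
`[-v, t - d]` (method of steps). Hence the `k`-th iterate of the solution map, started from any
continuous function, is a fixed point on `[-v, -v + k d]`, and two fixed points agree on
`[-v, -v + k d]` for every `k`. Continuity is preserved by the solution map because the Volterra
integral of the locally integrable kernel `u ^ (α - 1) * E_{α,α}(-λ u ^ α)` against a continuous
function is continuous; the kernel is locally integrable because `E_{α,α}` is continuous, which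
follows from the super-exponential growth `Γ(s) ≥ c ^ (s - 1) e ^ (-c)`.
-/

open MeasureTheory Set Filter Real

theorem Real.rpow_sub_one_mul_exp_neg_le_Gamma {c s : ℝ} (hc : 0 < c) (hs : 1 ≤ s) :
    c ^ (s - 1) * exp (-c) ≤ Gamma s := by
  have hint := GammaIntegral_convergent (by linarith : 0 < s)
  rw [Gamma_eq_integral (by linarith)]
  calc c ^ (s - 1) * exp (-c) = ∫ x in Ioi c, c ^ (s - 1) * exp (-x) := by
        rw [integral_const_mul, integral_exp_neg_Ioi]
    _ ≤ ∫ x in Ioi c, exp (-x) * x ^ (s - 1) := by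
        refine setIntegral_mono_on ((integrableOn_exp_neg_Ioi c).const_mul _)
          (hint.mono_set (Ioi_subset_Ioi hc.le)) measurableSet_Ioi fun x hx => ?_
        rw [mul_comm (exp (-x))]
        exact mul_le_mul_of_nonneg_right (rpow_le_rpow hc.le (le_of_lt hx) (by linarith))
          (exp_pos _).le
    _ ≤ ∫ x in Ioi 0, exp (-x) * x ^ (s - 1) :=
        setIntegral_mono_set hint
          (ae_restrict_of_forall_mem measurableSet_Ioi fun x hx =>
            (mul_pos (exp_pos _) (rpow_pos_of_pos hx _)).le)
          (Ioi_subset_Ioi hc.le).eventuallyLE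

theorem Real.summable_pow_div_Gamma {a : ℝ} (ha : 0 < a) (b R : ℝ) :
    Summable fun n : ℕ => R ^ n / Gamma (a * n + b) := by
  -- `c ^ (a * n) = (2|R| + 1) ^ n`, so the Gamma bound beats `|R| ^ n` by a geometric factor.
  set c := (2 * |R| + 1) ^ a⁻¹
  have hc0 : 0 < c := by positivity
  have hq : |R| / (2 * |R| + 1) < 1 := by
    rw [div_lt_one (by positivity)]; linarith [abs_nonneg R]
  refine Summable.of_norm_bounded_eventually_nat
    ((summable_geometric_of_lt_one (by positivity) hq).mul_left (exp c / c ^ (b - 1))) ?_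
  filter_upwards [eventually_ge_atTop ⌈(1 - b) / a⌉₊] with n hn
  have hab : 1 ≤ a * n + b := by
    have := (div_le_iff₀' ha).1 ((Nat.ceil_le).1 hn)
    linarith
  have hcn : c ^ (a * n + b - 1) = (2 * |R| + 1) ^ n * c ^ (b - 1) := by
    rw [add_sub_assoc, rpow_add hc0, rpow_mul hc0.le, rpow_inv_rpow (by positivity) ha.ne',
      rpow_natCast]
  have hΓ : (2 * |R| + 1) ^ n * c ^ (b - 1) * exp (-c) ≤ Gamma (a * n + b) :=
    hcn ▸ Real.rpow_sub_one_mul_exp_neg_le_Gamma hc0 hab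
  rw [norm_div, norm_pow, Real.norm_eq_abs, Real.norm_of_nonneg (by positivity),
    div_le_iff₀ (by positivity)]
  calc |R| ^ n = exp c / c ^ (b - 1) * (|R| / (2 * |R| + 1)) ^ n
        * ((2 * |R| + 1) ^ n * c ^ (b - 1) * exp (-c)) := by
        rw [div_pow, exp_neg]; field_simp
    _ ≤ _ := by gcongr

theorem continuous_mittagLeffler {a : ℝ} (ha : 0 < a) (b : ℝ) :
    Continuous (mittagLeffler a b) := by
  refine continuous_iff_continuousAt.2 fun z => ?_
  set R := |z| + 1
  have hR : ContinuousOn (mittagLeffler a b) (Icc (-R) R) := by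
    refine continuousOn_tsum (fun n => ((continuous_pow n).div_const _).continuousOn)
      (summable_abs_iff.2 (summable_pow_div_Gamma ha b R)) fun n w hw => ?_
    rw [norm_div, norm_pow, abs_div, abs_pow, Real.norm_eq_abs, Real.norm_eq_abs]
    exact div_le_div_of_nonneg_right
      (pow_le_pow_left₀ (abs_nonneg _) ((abs_le.2 hw).trans (le_abs_self R)) n) (abs_nonneg _)
  exact hR.continuousAt (Icc_mem_nhds (by linarith [neg_abs_le z]) (by linarith [le_abs_self z]))

theorem continuousOn_integral_mul_comp_sub {K F : ℝ → ℝ} {T : ℝ}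
    (hK : IntervalIntegrable K volume 0 T) (hF : Continuous F) :
    ContinuousOn (fun t => ∫ u in (0 : ℝ)..t, K u * F (t - u)) (Icc 0 T) := by
  obtain ⟨M, hM⟩ := (isCompact_Icc (a := -T) (b := T)).exists_bound_of_continuousOn hF.continuousOn
  -- The moving endpoint becomes an indicator, continuous in `t` except at the null set `t = u`.
  refine ContinuousOn.congr (f := fun t => ∫ u in (0 : ℝ)..T, (Iic t).indicator
    (fun u => K u * F (t - u)) u) (fun t₀ ht₀ => ?_)
    fun t ht => (intervalIntegral.integral_indicator ht).symm
  have hT : 0 ≤ T := ht₀.1.trans ht₀.2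
  refine intervalIntegral.continuousWithinAt_of_dominated_interval (bound := fun u => ‖K u‖ * M)
    (Eventually.of_forall fun t => ?_) ?_ (hK.norm.mul_const M) ?_
  · exact (hK.aestronglyMeasurable_restrict_uIoc.mul
      (hF.comp (continuous_sub_left t)).aestronglyMeasurable).indicator measurableSet_Iic
  · filter_upwards [self_mem_nhdsWithin] with t ht
    refine Eventually.of_forall fun u hu => ?_
    rw [uIoc_of_le hT] at hu
    rw [norm_indicator_eq_indicator_norm]
    refine (indicator_le_self' (fun _ _ => norm_nonneg _) u).trans ?_
    rw [norm_mul]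
    gcongr
    exact hM _ ⟨by linarith [hu.2, ht.1], by linarith [hu.1, ht.2]⟩
  · filter_upwards [Measure.ae_ne volume t₀] with u hu _
    rcases hu.lt_or_gt with h | h
    · have hc : Continuous fun t => K u * F (t - u) := by fun_prop
      refine (hc.continuousAt.congr ?_).continuousWithinAt
      filter_upwards [lt_mem_nhds h] with t ht
      rw [indicator_of_mem (show u ∈ Iic t from ht.le)]
    · refine ((continuousAt_const (y := (0 : ℝ))).congr ?_).continuousWithinAt
      filter_upwards [gt_mem_nhds h] with t ht
      rw [indicator_of_notMem (show u ∉ Iic t from not_le.2 ht)]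

theorem continuousOn_integral_comp_sub_mul {K F : ℝ → ℝ} {T : ℝ}
    (hK : IntervalIntegrable K volume 0 T) (hF : ContinuousOn F (Icc 0 T)) :
    ContinuousOn (fun t => ∫ s in (0 : ℝ)..t, K (t - s) * F s) (Icc 0 T) := by
  rcases lt_or_ge T 0 with hT | hT
  · simp [Icc_eq_empty_of_lt hT]
  set G := IccExtend hT ((Icc 0 T).domRestrict F)
  have hG : Continuous G := hF.domRestrict.Icc_extend'
  refine (continuousOn_integral_mul_comp_sub hK hG).congr fun t ht => ?_
  have hsub :=
    intervalIntegral.integral_comp_sub_left (fun u => K u * G (t - u)) t (a := 0) (b := t)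
  rw [sub_self, sub_zero] at hsub
  refine Eq.trans ?_ hsub
  refine intervalIntegral.integral_congr fun s hs => ?_
  rw [uIcc_of_le ht.1] at hs
  simp only [sub_sub_cancel, G, IccExtend_of_mem hT _ ⟨hs.1, hs.2.trans ht.2⟩, domRestrict_apply]

def HasDelay {β : Type*} (Φ : (ℝ → β) → ℝ → β) (a d : ℝ) : Prop :=
  ∀ y z t, EqOn y z (Icc a (t - d)) → Φ y t = Φ z t

namespace HasDelay

variable {β : Type*} {Φ : (ℝ → β) → ℝ → β} {a d : ℝ}

theorem eqOn_of_fixed (hΦ : HasDelay Φ a d) (hd : 0 < d) {L : ℝ} {y z : ℝ → β}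
    (hy : ∀ t ∈ Icc a L, Φ y t = y t) (hz : ∀ t ∈ Icc a L, Φ z t = z t) :
    EqOn y z (Icc a L) := by
  suffices h : ∀ k : ℕ, ∀ t ∈ Icc a L, t < a + k * d → y t = z t by
    obtain ⟨k, hk⟩ := exists_nat_gt ((L - a) / d)
    exact fun t ht => h k t ht (by rw [div_lt_iff₀ hd] at hk; linarith [ht.2])
  intro k
  induction k with
  | zero => exact fun t ht htk => absurd ht.1 (by simpa using htk)
  | succ k ih =>
    intro t ht htk
    rw [← hy t ht, ← hz t ht]
    refine hΦ y z t fun s hs => ih s ⟨hs.1, by linarith [hs.2, ht.2]⟩ ?_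
    push_cast at htk
    linarith [hs.2]

theorem apply_iterate_eqOn (hΦ : HasDelay Φ a d) (x₀ : ℝ → β) (k : ℕ) :
    EqOn (Φ (Φ^[k] x₀)) (Φ^[k] x₀) (Ico a (a + k * d)) := by
  induction k with
  | zero => simp
  | succ k ih =>
    intro t ht
    rw [Function.iterate_succ_apply']
    refine hΦ _ _ t fun s hs => ih ⟨hs.1, ?_⟩
    push_cast at ht
    linarith [hs.2, ht.2]

theorem exists_fixed (hΦ : HasDelay Φ a d) (hd : 0 < d) {P : (ℝ → β) → Prop}
    (hP : ∀ y, P y → P (Φ y)) {x₀ : ℝ → β} (h₀ : P x₀) (L : ℝ) :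
    ∃ x, P x ∧ ∀ t ∈ Icc a L, Φ x t = x t := by
  obtain ⟨k, hk⟩ := exists_nat_gt ((L - a) / d)
  refine ⟨Φ^[k] x₀, Function.Iterate.rec P h₀ hP k, fun t ht => ?_⟩
  exact hΦ.apply_iterate_eqOn x₀ k ⟨ht.1, by rw [div_lt_iff₀ hd] at hk; linarith [ht.2]⟩

end HasDelay

section DelayedMildEquation

variable {ι : Type*} [Fintype ι]

def delayedNonlinearity (b g : ι → ℝ → ℝ) (τ : ι → ℝ) (y : ℝ → ℝ) (s : ℝ) : ℝ :=
  ∑ j, b j s * g j (y (s - τ j))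

noncomputable def mildSolutionMap (K ψ : ℝ → ℝ) (N : (ℝ → ℝ) → ℝ → ℝ) (y : ℝ → ℝ) (t : ℝ) : ℝ :=
  if t ≤ 0 then ψ t else ∫ s in (0 : ℝ)..t, K (t - s) * N y s

theorem hasDelay_mildSolutionMap_delayedNonlinearity {K ψ : ℝ → ℝ} {b g : ι → ℝ → ℝ}
    {τ : ι → ℝ} {d v : ℝ} (hτ : ∀ j, d ≤ τ j ∧ τ j ≤ v) :
    HasDelay (mildSolutionMap K ψ (delayedNonlinearity b g τ)) (-v) d := by
  intro y z t hyz
  unfold mildSolutionMap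
  split_ifs with ht
  · rfl
  refine intervalIntegral.integral_congr fun s hs => ?_
  rw [uIcc_of_le (not_le.1 ht).le] at hs
  refine congrArg (K (t - s) * ·) (Finset.sum_congr rfl fun j _ => ?_)
  rw [hyz ⟨by linarith [hs.1, (hτ j).2], by linarith [hs.2, (hτ j).1]⟩]

theorem continuousOn_delayedNonlinearity {b g : ι → ℝ → ℝ} {τ : ι → ℝ} {v T : ℝ}
    (hb : ∀ j, ContinuousOn (b j) (Icc 0 T)) (hg : ∀ j, Continuous (g j))
    (hτ : ∀ j, 0 ≤ τ j ∧ τ j ≤ v) {y : ℝ → ℝ} (hy : ContinuousOn y (Icc (-v) T)) :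
    ContinuousOn (delayedNonlinearity b g τ y) (Icc 0 T) :=
  continuousOn_finsetSum _ fun j _ => (hb j).mul <| (hg j).comp_continuousOn <|
    hy.comp (continuousOn_id.sub continuousOn_const) fun s hs =>
      ⟨by linarith [hs.1, (hτ j).2], by linarith [hs.2, (hτ j).1]⟩

theorem continuousOn_mildSolutionMap {K ψ : ℝ → ℝ} {N : (ℝ → ℝ) → ℝ → ℝ} {v T : ℝ}
    (hK : IntervalIntegrable K volume 0 T) (hψ : ContinuousOn ψ (Icc (-v) 0)) (hψ0 : ψ 0 = 0)
    {y : ℝ → ℝ} (hN : ContinuousOn (N y) (Icc 0 T)) :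
    ContinuousOn (mildSolutionMap K ψ N y) (Icc (-v) T) := by
  have hneg : ContinuousOn (mildSolutionMap K ψ N y) (Icc (-v) 0) :=
    hψ.congr fun t ht => if_pos ht.2
  have hpos : ContinuousOn (mildSolutionMap K ψ N y) (Icc 0 T) := by
    refine (continuousOn_integral_comp_sub_mul hK hN).congr fun t ht => ?_
    rcases ht.1.eq_or_lt with rfl | ht0
    · simp [mildSolutionMap, hψ0]
    · exact if_neg (not_le.2 ht0)
  refine (hneg.union_of_isClosed hpos isClosed_Icc isClosed_Icc).mono fun t ht => ?_
  rcases le_total t 0 with h | h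
  exacts [Or.inl ⟨ht.1, h⟩, Or.inr ⟨h, ht.2⟩]

theorem mildSolutionMap_fixed_iff {K ψ : ℝ → ℝ} {N : (ℝ → ℝ) → ℝ → ℝ} {v T : ℝ}
    (hv : 0 ≤ v) (hT : 0 ≤ T) (hψ0 : ψ 0 = 0) {x : ℝ → ℝ} :
    (∀ t ∈ Icc (-v) T, mildSolutionMap K ψ N x t = x t) ↔
      (∀ t ∈ Icc (-v) 0, x t = ψ t) ∧
        ∀ t ∈ Icc 0 T, x t = ∫ s in (0 : ℝ)..t, K (t - s) * N x s := by
  constructor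
  · intro hx
    refine ⟨fun t ht => ?_, fun t ht => ?_⟩
    · rw [← hx t ⟨ht.1, ht.2.trans hT⟩, mildSolutionMap, if_pos ht.2]
    · rw [← hx t ⟨by linarith [ht.1], ht.2⟩, mildSolutionMap]
      split_ifs with h
      · simp [le_antisymm h ht.1, hψ0]
      · rfl
  · rintro ⟨hneg, hpos⟩ t ht
    unfold mildSolutionMap
    split_ifs with h
    · exact (hneg t ⟨ht.1, h⟩).symm
    · exact (hpos t ⟨(not_le.1 h).le, ht.2⟩).symm

end DelayedMildEquation

noncomputable def voigtKernel (α lam u : ℝ) : ℝ :=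
  u ^ (α - 1) * mittagLeffler α α (-(lam * u ^ α))

theorem intervalIntegrable_voigtKernel {α : ℝ} (hα : 0 < α) (lam T : ℝ) :
    IntervalIntegrable (voigtKernel α lam) volume 0 T :=
  (intervalIntegral.intervalIntegrable_rpow' (by linarith)).mul_continuousOn <|
    ((continuous_mittagLeffler hα α).comp
      (continuous_const.mul (continuous_rpow_const hα.le)).neg).continuousOn

theorem delayed_fractional_existence_uniqueness_general
    (α lam T v : ℝ) (n : ℕ)
    (hα0 : 0 < α) (hT : 0 < T)
    (hv0 : 0 < v)
    (τ : Fin n → ℝ) (hτ : ∀ j, 0 < τ j ∧ τ j ≤ v)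
    (b : Fin n → ℝ → ℝ) (hb : ∀ j, ContinuousOn (b j) (Set.Icc 0 T))
    (g : Fin n → ℝ → ℝ) (l : Fin n → ℝ)
    (hg : ∀ j, ∀ x y : ℝ, |g j x - g j y| ≤ l j * |x - y|)
    (ψ : ℝ → ℝ) (hψ : ContinuousOn ψ (Set.Icc (-v) 0)) (hψ0 : ψ 0 = 0) :
    ∃ x : ℝ → ℝ,
      (ContinuousOn x (Set.Icc (-v) T) ∧
        (∀ t ∈ Set.Icc (-v) (0 : ℝ), x t = ψ t) ∧
        (∀ t ∈ Set.Icc (0 : ℝ) T,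
          x t = ∫ s in (0 : ℝ)..t,
            (t - s) ^ (α - 1) * mittagLeffler α α (-(lam * (t - s) ^ α)) *
              ∑ j, b j s * g j (x (s - τ j)))) ∧
      ∀ y : ℝ → ℝ,
        (ContinuousOn y (Set.Icc (-v) T) ∧
          (∀ t ∈ Set.Icc (-v) (0 : ℝ), y t = ψ t) ∧
          (∀ t ∈ Set.Icc (0 : ℝ) T,
            y t = ∫ s in (0 : ℝ)..t,
              (t - s) ^ (α - 1) * mittagLeffler α α (-(lam * (t - s) ^ α)) *
                ∑ j, b j s * g j (y (s - τ j)))) →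
        ∀ t ∈ Set.Icc (-v) T, y t = x t := by
  -- finitely many positive delays have a common positive lower bound
  obtain ⟨d, hdτ, hd⟩ := ((eventually_all.2 fun j => eventually_le_nhds (hτ j).1).filter_mono
    nhdsWithin_le_nhds |>.and (self_mem_nhdsWithin (s := Ioi (0 : ℝ)))).exists
  have hlag := hasDelay_mildSolutionMap_delayedNonlinearity (K := voigtKernel α lam) (ψ := ψ)
    (b := b) (g := g) fun j => ⟨hdτ j, (hτ j).2⟩
  have hg_cont : ∀ j, Continuous (g j) := fun j => (LipschitzWith.of_dist_le' (hg j)).continuous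
  have hK := intervalIntegrable_voigtKernel hα0 lam T
  obtain ⟨x, hx_cont, hx⟩ := hlag.exists_fixed hd (P := fun y => ContinuousOn y (Icc (-v) T))
    (fun y hy => continuousOn_mildSolutionMap hK hψ hψ0 <|
      continuousOn_delayedNonlinearity hb hg_cont (fun j => ⟨(hτ j).1.le, (hτ j).2⟩) hy)
    (x₀ := 0) continuousOn_const T
  refine ⟨x, ⟨hx_cont, (mildSolutionMap_fixed_iff hv0.le hT.le hψ0).1 hx⟩, fun y ⟨_, hy⟩ => ?_⟩
  exact fun t ht => hlag.eqOn_of_fixed hd ((mildSolutionMap_fixed_iff hv0.le hT.le hψ0).2 hy) hx ht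

/-- Existence and uniqueness of a solution of the delayed fractional Voigt model,
in mild (Volterra) form, under the contraction condition
`T^α Σ B_j l_j < Γ(α+1)`. -/
theorem delayed_fractional_existence_uniqueness
    (α lam T v : ℝ) (n : ℕ)
    (hα0 : 0 < α) (hα1 : α < 1) (hlam : 0 < lam) (hT : 0 < T)
    (hv0 : 0 < v) (hvT : v ≤ T)
    (τ : Fin n → ℝ) (hτ : ∀ j, 0 < τ j ∧ τ j ≤ v)
    (b : Fin n → ℝ → ℝ) (hb : ∀ j, ContinuousOn (b j) (Set.Icc 0 T))
    (B : Fin n → ℝ) (hB : ∀ j, ∀ t ∈ Set.Icc (0 : ℝ) T, |b j t| ≤ B j)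
    (g : Fin n → ℝ → ℝ) (l : Fin n → ℝ) (hl : ∀ j, 0 < l j)
    (hg : ∀ j, ∀ x y : ℝ, |g j x - g j y| ≤ l j * |x - y|)
    (ψ : ℝ → ℝ) (hψ : ContinuousOn ψ (Set.Icc (-v) 0)) (hψ0 : ψ 0 = 0)
    (hcontr : T ^ α * ∑ j, B j * l j < Real.Gamma (α + 1)) :
    ∃ x : ℝ → ℝ,
      (ContinuousOn x (Set.Icc (-v) T) ∧
        (∀ t ∈ Set.Icc (-v) (0 : ℝ), x t = ψ t) ∧
        (∀ t ∈ Set.Icc (0 : ℝ) T,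
          x t = ∫ s in (0 : ℝ)..t,
            (t - s) ^ (α - 1) * mittagLeffler α α (-(lam * (t - s) ^ α)) *
              ∑ j, b j s * g j (x (s - τ j)))) ∧
      ∀ y : ℝ → ℝ,
        (ContinuousOn y (Set.Icc (-v) T) ∧
          (∀ t ∈ Set.Icc (-v) (0 : ℝ), y t = ψ t) ∧
          (∀ t ∈ Set.Icc (0 : ℝ) T,
            y t = ∫ s in (0 : ℝ)..t,
              (t - s) ^ (α - 1) * mittagLeffler α α (-(lam * (t - s) ^ α)) *
                ∑ j, b j s * g j (y (s - τ j)))) →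
        ∀ t ∈ Set.Icc (-v) T, y t = x t :=
  delayed_fractional_existence_uniqueness_general α lam T v n hα0 hT hv0 τ hτ b hb g l hg ψ hψ hψ0
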